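/- With notation as in the standing completion setup, let M be a left module over H(R, φ, z) on which x acts locally nilpotently. Then τ acts locally nilpotently on M, so the R-module structure on M extends uniquely to an R̂-module structure (each r̂ ∈ R̂ acts on m ∈ M through any preimage of its image in R/(τⁿ) for n with τⁿ·m = 0). With respect to this structure, e·M = M^{z^∞}, where M^{z^∞} = {m ∈ M : zⁿ·m = 0 for some n}. -/

import Mathlib

universe u
section GWADefs

variable (R : Type u) [Ring R] (φ : R ≃+* R) (z : R)

/-- The defining relations of the generalized Weyl algebra `H(R, φ, z)`, presented as a quotient
of the free `ℤ`-algebra on the underlying set of `R` together with two generators `x` (encoded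
as `Sum.inr 0`) and `y` (encoded as `Sum.inr 1`).  The first three families of relations encode
the ring structure of `R`; the remaining ones are the GWA relations
`yx = z`, `xy = φ⁻¹(z)`, `xr = φ⁻¹(r)x`, `yr = φ(r)y`. -/
inductive GWARel : FreeAlgebra ℤ (R ⊕ Fin 2) → FreeAlgebra ℤ (R ⊕ Fin 2) → Prop
  | add (r s : R) : GWARel
      (FreeAlgebra.ι ℤ (Sum.inl r) + FreeAlgebra.ι ℤ (Sum.inl s))
      (FreeAlgebra.ι ℤ (Sum.inl (r + s)))
  | mul (r s : R) : GWARel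
      (FreeAlgebra.ι ℤ (Sum.inl r) * FreeAlgebra.ι ℤ (Sum.inl s))
      (FreeAlgebra.ι ℤ (Sum.inl (r * s)))
  | one : GWARel (FreeAlgebra.ι ℤ (Sum.inl (1 : R))) 1
  | yx : GWARel (FreeAlgebra.ι ℤ (Sum.inr 1) * FreeAlgebra.ι ℤ (Sum.inr 0))
      (FreeAlgebra.ι ℤ (Sum.inl z))
  | xy : GWARel (FreeAlgebra.ι ℤ (Sum.inr 0) * FreeAlgebra.ι ℤ (Sum.inr 1))
      (FreeAlgebra.ι ℤ (Sum.inl (φ.symm z)))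
  | xr (r : R) : GWARel (FreeAlgebra.ι ℤ (Sum.inr 0) * FreeAlgebra.ι ℤ (Sum.inl r))
      (FreeAlgebra.ι ℤ (Sum.inl (φ.symm r)) * FreeAlgebra.ι ℤ (Sum.inr 0))
  | yr (r : R) : GWARel (FreeAlgebra.ι ℤ (Sum.inr 1) * FreeAlgebra.ι ℤ (Sum.inl r))
      (FreeAlgebra.ι ℤ (Sum.inl (φ r)) * FreeAlgebra.ι ℤ (Sum.inr 1))

/-- The generalized Weyl algebra `H(R, φ, z)`. -/
abbrev GWA : Type u := RingQuot (GWARel R φ z)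

/-- The generator `x` of the generalized Weyl algebra. -/
noncomputable def GWA.X : GWA R φ z :=
  RingQuot.mkRingHom (GWARel R φ z) (FreeAlgebra.ι ℤ (Sum.inr 0))

/-- The generator `y` of the generalized Weyl algebra. -/
noncomputable def GWA.Y : GWA R φ z :=
  RingQuot.mkRingHom (GWARel R φ z) (FreeAlgebra.ι ℤ (Sum.inr 1))

/-- The canonical ring homomorphism `R → H(R, φ, z)`. -/
noncomputable def GWA.ofBase : R →+* GWA R φ z where
  toFun r := RingQuot.mkRingHom (GWARel R φ z) (FreeAlgebra.ι ℤ (Sum.inl r))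
  map_one' := by
    have := RingQuot.mkRingHom_rel (GWARel.one (R := R) (φ := φ) (z := z))
    simpa using this
  map_mul' r s := by
    have := RingQuot.mkRingHom_rel (GWARel.mul (φ := φ) (z := z) r s)
    simp only [map_mul] at this
    exact this.symm
  map_zero' := by
    have := RingQuot.mkRingHom_rel (GWARel.add (φ := φ) (z := z) 0 0)
    simp only [map_add, add_zero] at this
    exact add_eq_left.mp this
  map_add' r s := by
    have := RingQuot.mkRingHom_rel (GWARel.add (φ := φ) (z := z) r s)
    simp only [map_add] at this
    exact this.symm

end GWADefs

section CompletionSetup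

variable (R : Type u) [CommRing R] (φ : R ≃+* R) (z : R) (l : ℕ)

/-- The element `τ = z·φ(z)·φ²(z)⋯φ^{l−1}(z)`. -/
noncomputable def gwaTau : R := ∏ i ∈ Finset.range l, (φ ^ i) z

/-- The `(τ)`-adic completion `R̂` of `R`. -/
noncomputable abbrev RHat : Type u := AdicCompletion (Ideal.span {gwaTau R φ z l}) R

/-- The evaluation (projection) map `R̂ → R/(τⁿ)` from the `(τ)`-adic completion. -/
noncomputable def RHat.proj (n : ℕ) :
    RHat R φ z l →ₗ[R]
      R ⧸ ((Ideal.span {gwaTau R φ z l}) ^ n • ⊤ : Submodule R R) :=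
  AdicCompletion.eval (Ideal.span {gwaTau R φ z l}) R n

end CompletionSetup

/-- An action `s : R̂ → M → M` of the `(τ)`-adic completion `R̂` on a left
`H(R, φ, z)`-module `M` which is an extension of the `R`-module structure to an `R̂`-module
structure given by the canonical truncation formula: `r̂` acts on `m` through any preimage
in `R` of the image of `r̂` in `R/(τⁿ)`, where `n` is such that `τⁿ·m = 0`. -/
def IsCompletedSMul (R : Type u) [CommRing R] (φ : R ≃+* R) (z : R) (l : ℕ)
    (M : Type u) [AddCommGroup M] [Module (GWA R φ z) M]
    (s : RHat R φ z l → M → M) : Prop :=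
  (∀ (x : RHat R φ z l) (m m' : M), s x (m + m') = s x m + s x m') ∧
  (∀ (x y : RHat R φ z l) (m : M), s (x + y) m = s x m + s y m) ∧
  (∀ (x y : RHat R φ z l) (m : M), s (x * y) m = s x (s y m)) ∧
  (∀ m : M, s 1 m = m) ∧
  (∀ (r : R) (m : M), s (algebraMap R (RHat R φ z l) r) m = GWA.ofBase R φ z r • m) ∧
  (∀ (x : RHat R φ z l) (m : M) (n : ℕ) (r : R),
    (GWA.ofBase R φ z (gwaTau R φ z l)) ^ n • m = 0 →
    RHat.proj R φ z l n x = Submodule.Quotient.mk r →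
    s x m = GWA.ofBase R φ z r • m)

/-!
Since `Y^k X^k = z φ(z) ⋯ φ^{k-1}(z)` in `H(R, φ, z)` and `φ^l(z) ≡ z` modulo the nilradical,
`τ` lies in the radical of the ideal generated by `z φ(z) ⋯ φ^{kl-1}(z)`, which kills every `m`
with `x^k m = 0`. An element killed by `τ^n` is a module over `R ⧸ (τ^n)`, through which `R̂`
acts, independently of `n`.

For such `m`, let `Q = R ⧸ Ann(m)`. The image of `e` in `Q` is an idempotent that is `≡ 1`
modulo `z` and divisible by the cofactor `φ(z) ⋯ φ^{l-1}(z)` of `z` in `τ`. If `z` is nilpotent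
in `Q`, the idempotent `1 - e` is nilpotent, hence `0`; if `e = 1` in `Q`, the cofactor is a
unit, so `z` is nilpotent together with `τ`.
-/

open Submodule

theorem Finset.prod_range_mul_eq_pow_of_periodic {M : Type*} [CommMonoid M] {f : ℕ → M}
    {l : ℕ} (hf : Function.Periodic f l) (k : ℕ) :
    ∏ i ∈ Finset.range (k * l), f i = (∏ i ∈ Finset.range l, f i) ^ k := by
  induction k with
  | zero => simp
  | succ k ih =>
    rw [add_mul, one_mul, Finset.prod_range_add, ih, pow_succ]
    congr 1
    refine Finset.prod_congr rfl fun i _ => ?_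
    simpa [add_comm] using hf.nat_mul k i

theorem Submodule.span_singleton_pow_le_annihilator_iff {R M : Type*} [CommRing R]
    [AddCommGroup M] [Module R M] {t : R} {m : M} {n : ℕ} :
    Ideal.span {t} ^ n ≤ (R ∙ m).annihilator ↔ t ^ n • m = 0 := by
  rw [Ideal.span_singleton_pow, Ideal.span_singleton_le_iff_mem,
    mem_annihilator_span_singleton]

theorem Submodule.smul_eq_self_iff_mk_annihilator_eq_one {R M : Type*} [CommRing R]
    [AddCommGroup M] [Module R M] {r : R} {m : M} :
    r • m = m ↔ Ideal.Quotient.mk (R ∙ m).annihilator r = 1 := by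
  rw [← map_one (Ideal.Quotient.mk _), Ideal.Quotient.eq, mem_annihilator_span_singleton,
    sub_smul, one_smul, sub_eq_zero]

theorem Submodule.exists_pow_smul_eq_zero_iff_isNilpotent {R M : Type*} [CommRing R]
    [AddCommGroup M] [Module R M] {r : R} {m : M} :
    (∃ n : ℕ, r ^ n • m = 0) ↔ IsNilpotent (Ideal.Quotient.mk (R ∙ m).annihilator r) := by
  simp only [IsNilpotent, ← map_pow, Ideal.Quotient.eq_zero_iff_mem,
    mem_annihilator_span_singleton]

namespace AdicCompletion

variable {R : Type*} [CommRing R] {I : Ideal R}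

theorem exists_eval_eq_mk (n : ℕ) (x : AdicCompletion I R) :
    ∃ r : R, eval I R n x = Submodule.Quotient.mk r :=
  (Submodule.Quotient.mk_surjective _ (eval I R n x)).imp fun _ h => h.symm

theorem sub_mem_pow_of_eval_eq_mk {k n : ℕ} (hkn : k ≤ n) {x : AdicCompletion I R} {r r' : R}
    (hn : eval I R n x = Submodule.Quotient.mk r) (hk : eval I R k x = Submodule.Quotient.mk r') :
    r - r' ∈ I ^ k := by
  have : (Submodule.Quotient.mk r : R ⧸ (I ^ k • ⊤ : Submodule R R)) =
      Submodule.Quotient.mk r' := by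
    rw [← hk, eval_apply, ← transitionMap_comp_eval_apply I R hkn, ← eval_apply, hn]
    rfl
  simpa using (Submodule.Quotient.eq _).mp this

theorem eval_mul_of_eq_mk {n : ℕ} {x y : AdicCompletion I R} {u v : R}
    (hx : eval I R n x = Submodule.Quotient.mk u) (hy : eval I R n y = Submodule.Quotient.mk v) :
    eval I R n (x * y) = Submodule.Quotient.mk (u * v) := by
  rw [eval_apply] at hx hy ⊢
  rw [val_mul, hx, hy, Ideal.Quotient.mk_eq_mk, Ideal.Quotient.mk_eq_mk,
    Ideal.Quotient.mk_eq_mk, ← map_mul]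

variable {M : Type*} [AddCommGroup M] [Module R M]

/-- `x` acts on `m` through a lift to `R` of its image in `R ⧸ I ^ n`, for a chosen `n` with
`I ^ n • m = 0`; by `torsionSMul_eq` any other such `n` and lift give the same result. -/
noncomputable def torsionSMul (hM : ∀ m : M, ∃ n, I ^ n ≤ (R ∙ m).annihilator)
    (x : AdicCompletion I R) (m : M) : M :=
  (exists_eval_eq_mk (hM m).choose x).choose • m

variable {hM : ∀ m : M, ∃ n, I ^ n ≤ (R ∙ m).annihilator}

theorem torsionSMul_eq {x : AdicCompletion I R} {m : M} {n : ℕ} {r : R}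
    (hm : I ^ n ≤ (R ∙ m).annihilator) (hx : eval I R n x = Submodule.Quotient.mk r) :
    torsionSMul hM x m = r • m := by
  have hm₀ := (hM m).choose_spec
  have hx₀ := (exists_eval_eq_mk (hM m).choose x).choose_spec
  rw [torsionSMul, ← sub_eq_zero, ← sub_smul, ← mem_annihilator_span_singleton]
  rcases le_total n (hM m).choose with h | h
  · exact hm (sub_mem_pow_of_eval_eq_mk h hx₀ hx)
  · exact neg_sub r _ ▸ neg_mem (hm₀ (sub_mem_pow_of_eval_eq_mk h hx hx₀))

theorem torsionSMul_add (x : AdicCompletion I R) (m m' : M) :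
    torsionSMul hM x (m + m') = torsionSMul hM x m + torsionSMul hM x m' := by
  obtain ⟨n, hn⟩ := hM m
  obtain ⟨n', hn'⟩ := hM m'
  have hm : I ^ max n n' ≤ (R ∙ m).annihilator :=
    (Ideal.pow_le_pow_right (le_max_left n n')).trans hn
  have hm' : I ^ max n n' ≤ (R ∙ m').annihilator :=
    (Ideal.pow_le_pow_right (le_max_right n n')).trans hn'
  have hmm' : I ^ max n n' ≤ (R ∙ (m + m')).annihilator := fun r hr => by
    rw [mem_annihilator_span_singleton, smul_add, (mem_annihilator_span_singleton m r).mp (hm hr),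
      (mem_annihilator_span_singleton m' r).mp (hm' hr), add_zero]
  obtain ⟨r, hr⟩ := exists_eval_eq_mk (max n n') x
  rw [torsionSMul_eq hm hr, torsionSMul_eq hm' hr, torsionSMul_eq hmm' hr, smul_add]

theorem add_torsionSMul (x y : AdicCompletion I R) (m : M) :
    torsionSMul hM (x + y) m = torsionSMul hM x m + torsionSMul hM y m := by
  obtain ⟨n, hn⟩ := hM m
  obtain ⟨u, hu⟩ := exists_eval_eq_mk n x
  obtain ⟨v, hv⟩ := exists_eval_eq_mk n y
  have huv : eval I R n (x + y) = Submodule.Quotient.mk (u + v) := by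
    rw [map_add, hu, hv, Submodule.Quotient.mk_add]
  rw [torsionSMul_eq hn hu, torsionSMul_eq hn hv, torsionSMul_eq hn huv, add_smul]

theorem mul_torsionSMul (x y : AdicCompletion I R) (m : M) :
    torsionSMul hM (x * y) m = torsionSMul hM x (torsionSMul hM y m) := by
  obtain ⟨n, hn⟩ := hM m
  obtain ⟨u, hu⟩ := exists_eval_eq_mk n x
  obtain ⟨v, hv⟩ := exists_eval_eq_mk n y
  have hvm : I ^ n ≤ (R ∙ (v • m)).annihilator :=
    hn.trans (annihilator_mono (span_singleton_smul_le R v m))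
  rw [torsionSMul_eq hn (eval_mul_of_eq_mk hu hv), torsionSMul_eq hn hv,
    torsionSMul_eq hvm hu, mul_smul]

theorem algebraMap_torsionSMul (r : R) (m : M) :
    torsionSMul hM (algebraMap R (AdicCompletion I R) r) m = r • m :=
  torsionSMul_eq (hM m).choose_spec rfl

theorem one_torsionSMul (m : M) : torsionSMul hM (1 : AdicCompletion I R) m = m := by
  rw [← map_one (algebraMap R (AdicCompletion I R)), algebraMap_torsionSMul, one_smul]

theorem eq_torsionSMul {s : AdicCompletion I R → M → M}
    (hs : ∀ x m n r, I ^ n ≤ (R ∙ m).annihilator → eval I R n x = Submodule.Quotient.mk r →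
      s x m = r • m) :
    s = torsionSMul hM := by
  funext x m
  obtain ⟨n, hn⟩ := hM m
  obtain ⟨r, hr⟩ := exists_eval_eq_mk n x
  rw [hs x m n r hn hr, torsionSMul_eq hn hr]

theorem torsionSMul_eq_self_iff {t p z r : R} (hpz : p * z = t)
    {hM : ∀ m : M, ∃ n, Ideal.span {t} ^ n ≤ (R ∙ m).annihilator}
    {e : AdicCompletion (Ideal.span {t}) R} (he : IsIdempotentElem e)
    (her : eval _ R 1 e = Submodule.Quotient.mk r) (hrz : r - 1 ∈ Ideal.span {z})
    (hrp : r ∈ Ideal.span {p}) (m : M) :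
    torsionSMul hM e m = m ↔ ∃ n : ℕ, z ^ n • m = 0 := by
  subst hpz
  obtain ⟨n, hn⟩ := hM m
  have hn' := (Ideal.pow_le_pow_right n.le_succ).trans hn
  obtain ⟨a, ha⟩ := exists_eval_eq_mk (n + 1) e
  rw [torsionSMul_eq hn' ha, smul_eq_self_iff_mk_annihilator_eq_one, exists_pow_smul_eq_zero_iff_isNilpotent]
  set π := Ideal.Quotient.mk (R ∙ m).annihilator
  have hpz_dvd : p * z ∣ a - r := by
    simpa [Ideal.mem_span_singleton] using sub_mem_pow_of_eval_eq_mk (by omega) ha her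
  have hidem : IsIdempotentElem (π a) := by
    rw [IsIdempotentElem, ← map_mul, Ideal.Quotient.eq]
    exact hn' (sub_mem_pow_of_eval_eq_mk le_rfl (he ▸ eval_mul_of_eq_mk ha ha) ha)
  have hnil : IsNilpotent (π (p * z)) := ⟨n, by
    rw [← map_pow, Ideal.Quotient.eq_zero_iff_mem]
    exact hn (Ideal.pow_mem_pow (Ideal.mem_span_singleton_self _) n)⟩
  constructor
  · intro ha1
    obtain ⟨c, hc⟩ : p ∣ a := by
      simpa using dvd_add (Ideal.mem_span_singleton.mp hrp) ((dvd_mul_right p z).trans hpz_dvd)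
    have hz : π z = π (p * z) * π c := calc
      π z = π z * π a := by rw [ha1, mul_one]
      _ = π (p * z) * π c := by rw [← map_mul, ← map_mul, hc, mul_left_comm, mul_assoc]
    rw [hz]
    exact (Commute.all _ _).isNilpotent_mul_right hnil
  · intro hz
    obtain ⟨c, hc⟩ : z ∣ 1 - a := by
      have h : 1 - a = -(r - 1) - (a - r) := by ring
      rw [h]
      exact dvd_sub (dvd_neg.mpr (Ideal.mem_span_singleton.mp hrz))
        ((dvd_mul_left z p).trans hpz_dvd)
    have h1a : IsNilpotent (1 - π a) := by
      rw [← map_one π, ← map_sub, hc, map_mul]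
      exact (Commute.all _ _).isNilpotent_mul_right hz
    exact (sub_eq_zero.mp (hidem.one_sub.eq_zero_of_isNilpotent h1a)).symm

end AdicCompletion

namespace GWA

variable {R : Type u} [Ring R] {φ : R ≃+* R} {z : R}

theorem Y_mul_X : Y R φ z * X R φ z = ofBase R φ z z :=
  (map_mul _ _ _).symm.trans (RingQuot.mkRingHom_rel GWARel.yx)

theorem Y_mul_ofBase (r : R) : Y R φ z * ofBase R φ z r = ofBase R φ z (φ r) * Y R φ z :=
  (map_mul _ _ _).symm.trans ((RingQuot.mkRingHom_rel (GWARel.yr r)).trans (map_mul _ _ _))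

theorem Y_pow_mul_ofBase (n : ℕ) (r : R) :
    Y R φ z ^ n * ofBase R φ z r = ofBase R φ z ((φ ^ n) r) * Y R φ z ^ n := by
  induction n generalizing r with
  | zero => simp
  | succ n ih =>
    rw [pow_succ, mul_assoc, Y_mul_ofBase, ← mul_assoc, ih, mul_assoc, pow_succ]
    rfl

theorem Y_pow_mul_X_pow {R : Type u} [CommRing R] {φ : R ≃+* R} {z : R} (n : ℕ) :
    Y R φ z ^ n * X R φ z ^ n = ofBase R φ z (∏ i ∈ Finset.range n, (φ ^ i) z) := by
  induction n with
  | zero => simp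
  | succ n ih =>
    rw [pow_succ, pow_succ', mul_assoc, ← mul_assoc (Y R φ z), Y_mul_X, ← mul_assoc,
      Y_pow_mul_ofBase, mul_assoc, ih, ← map_mul, Finset.prod_range_succ, mul_comm]

end GWA

section Orbit

variable {R : Type u} [CommRing R] (φ : R ≃+* R) (z : R) {l : ℕ}

theorem gwaTau_eq_prod_mul (hl : 1 ≤ l) :
    gwaTau R φ z l = (∏ i ∈ Finset.range (l - 1), (φ ^ (i + 1)) z) * z := by
  obtain ⟨k, rfl⟩ := Nat.exists_eq_add_of_le' hl
  simp [gwaTau, Finset.prod_range_succ']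

variable {φ z}

theorem gwaTau_mem_radical_span_prod (hφz : IsNilpotent ((φ ^ l) z - z)) (k : ℕ) :
    gwaTau R φ z l ∈ (Ideal.span {∏ i ∈ Finset.range (k * l), (φ ^ i) z}).radical := by
  set π := Ideal.Quotient.mk (nilradical R)
  have hper : Function.Periodic (fun i => π ((φ ^ i) z)) l := fun i => by
    rw [Ideal.Quotient.eq, pow_add, RingAut.mul_apply, ← map_sub]
    exact mem_nilradical.mpr (hφz.map _)
  have hpow : π (gwaTau R φ z l ^ k) = π (∏ i ∈ Finset.range (k * l), (φ ^ i) z) := by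
    simp only [map_pow, map_prod, gwaTau, Finset.prod_range_mul_eq_pow_of_periodic hper]
  refine Ideal.mem_radical_of_pow_mem (m := k) ?_
  rw [← sub_add_cancel (gwaTau R φ z l ^ k) (∏ i ∈ Finset.range (k * l), (φ ^ i) z)]
  exact add_mem (Ideal.radical_mono bot_le (Ideal.Quotient.eq.mp hpow))
    (Ideal.le_radical (Ideal.mem_span_singleton_self _))

theorem prod_pow_succ_apply_dvd_of_mem_span
    (hcop : ∀ i : ℕ, 1 ≤ i → i ≤ l - 1 → Ideal.span {z, (φ ^ i) z} = ⊤) {r : R}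
    (hr : ∀ i : ℕ, 1 ≤ i → i ≤ l - 1 → r ∈ Ideal.span {(φ ^ i) z}) :
    ∏ i ∈ Finset.range (l - 1), (φ ^ (i + 1)) z ∣ r := by
  have hcop' : ∀ i j, i < j → j < l - 1 → IsCoprime ((φ ^ (i + 1)) z) ((φ ^ (j + 1)) z) := by
    intro i j hij hj
    obtain ⟨a, b, hab⟩ := Ideal.mem_span_pair.mp
      ((Ideal.eq_top_iff_one _).mp (hcop (j - i) (by omega) (by omega)))
    rw [show j + 1 = i + 1 + (j - i) by omega, pow_add φ (i + 1) (j - i)]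
    exact IsCoprime.map ⟨a, b, hab⟩ (φ ^ (i + 1)).toRingHom
  refine Finset.prod_dvd_of_coprime (fun i hi j hj hij => ?_) fun i hi =>
    Ideal.mem_span_singleton.mp (hr (i + 1) (by omega) (by simpa using hi))
  simp only [Finset.coe_range, Set.mem_Iio] at hi hj
  rcases hij.lt_or_gt with h | h
  · exact hcop' i j h hj
  · exact (hcop' j i h hi).symm

end Orbit

theorem GWA.exists_pow_ofBase_gwaTau_smul_eq_zero {R : Type u} [CommRing R] {φ : R ≃+* R}
    {z : R} {l : ℕ} (hl : 1 ≤ l) (hφz : IsNilpotent ((φ ^ l) z - z)) {M : Type*}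
    [AddCommGroup M] [Module (GWA R φ z) M] {m : M} (hm : ∃ n, X R φ z ^ n • m = 0) :
    ∃ n, ofBase R φ z (gwaTau R φ z l) ^ n • m = 0 := by
  obtain ⟨n, hn⟩ := hm
  have hXnl : X R φ z ^ (n * l) • m = 0 := by
    rw [← pow_sub_mul_pow _ (Nat.le_mul_of_pos_right n hl), mul_smul, hn, smul_zero]
  obtain ⟨d, hd⟩ := gwaTau_mem_radical_span_prod hφz n
  obtain ⟨c, hc⟩ := Ideal.mem_span_singleton'.mp hd
  refine ⟨d, ?_⟩
  rw [← map_pow, ← hc, map_mul, ← Y_pow_mul_X_pow, mul_smul, mul_smul, hXnl, smul_zero,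
    smul_zero]

open AdicCompletion in
theorem statement16_general (R : Type u) [CommRing R] (φ : R ≃+* R) (z b : R) (l : ℕ)
    (hb : IsNilpotent b) (hl : 1 ≤ l)
    (hφl : ∃ r : R, (φ ^ l) z - z = b * r)
    (hcop : ∀ i : ℕ, 1 ≤ i → i ≤ l - 1 → Ideal.span {z, (φ ^ i) z} = ⊤)
    (e : RHat R φ z l) (he : e * e = e)
    (heval : ∃ r : R, RHat.proj R φ z l 1 e = Submodule.Quotient.mk r ∧
      r - 1 ∈ Ideal.span {z} ∧
      ∀ i : ℕ, 1 ≤ i → i ≤ l - 1 → r ∈ Ideal.span {(φ ^ i) z})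
    (M : Type u) [AddCommGroup M] [Module (GWA R φ z) M]
    (hM : ∀ m : M, ∃ n : ℕ, (GWA.X R φ z) ^ n • m = 0) :
    (∀ m : M, ∃ n : ℕ, (GWA.ofBase R φ z (gwaTau R φ z l)) ^ n • m = 0) ∧
    ∃ s : RHat R φ z l → M → M, IsCompletedSMul R φ z l M s ∧
      (∀ s' : RHat R φ z l → M → M, IsCompletedSMul R φ z l M s' → s' = s) ∧
      (∀ m : M, (∃ n : ℕ, (GWA.ofBase R φ z z) ^ n • m = 0) ↔ s e m = m) := by
  let : Module R M := Module.compHom M (GWA.ofBase R φ z)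
  have hφz : IsNilpotent ((φ ^ l) z - z) := by
    obtain ⟨r, hr⟩ := hφl
    exact hr ▸ (Commute.all b r).isNilpotent_mul_right hb
  have hτ (m : M) : ∃ n, GWA.ofBase R φ z (gwaTau R φ z l) ^ n • m = 0 :=
    GWA.exists_pow_ofBase_gwaTau_smul_eq_zero hl hφz (hM m)
  have hann (m : M) (n : ℕ) : Ideal.span {gwaTau R φ z l} ^ n ≤ (R ∙ m).annihilator ↔
      GWA.ofBase R φ z (gwaTau R φ z l) ^ n • m = 0 := by
    rw [span_singleton_pow_le_annihilator_iff, ← map_pow]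
    rfl
  have hτ' (m : M) : ∃ n, Ideal.span {gwaTau R φ z l} ^ n ≤ (R ∙ m).annihilator :=
    (hτ m).imp fun n => (hann m n).mpr
  refine ⟨hτ, torsionSMul hτ', ⟨torsionSMul_add, add_torsionSMul, mul_torsionSMul,
    one_torsionSMul, algebraMap_torsionSMul, fun x m n r hm hx =>
      torsionSMul_eq ((hann m n).mpr hm) hx⟩,
    fun s' hs' => eq_torsionSMul fun x m n r hm hx => hs'.2.2.2.2.2 x m n r ((hann m n).mp hm) hx,
    fun m => ?_⟩
  obtain ⟨r, her, hrz, hri⟩ := heval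
  rw [torsionSMul_eq_self_iff (gwaTau_eq_prod_mul φ z hl).symm he her hrz
    (Ideal.mem_span_singleton.mpr (prod_pow_succ_apply_dvd_of_mem_span hcop hri))]
  simp only [← map_pow]
  rfl

/-- (Standing completion setup.)  Let `M` be a left `H(R, φ, z)`-module on
which `x` acts locally nilpotently.  Then `τ` acts locally nilpotently on `M`, the `R`-module
structure on `M` extends uniquely to an `R̂`-module structure via the truncation formula
(each `r̂ ∈ R̂` acts on `m` through any preimage of its image in `R/(τⁿ)`, for `n` with
`τⁿ·m = 0`), and with respect to this structure `e·M = M^{z^∞}`. -/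
theorem statement16 (R : Type u) [CommRing R] (φ : R ≃+* R) (z b : R) (l : ℕ)
    (hz : z ∈ nonZeroDivisors R) (hb : IsNilpotent b) (hl : 1 ≤ l)
    (hφl : ∃ r : R, (φ ^ l) z - z = b * r)
    (hcop : ∀ i : ℕ, 1 ≤ i → i ≤ l - 1 → Ideal.span {z, (φ ^ i) z} = ⊤)
    (φhat : RHat R φ z l ≃+* RHat R φ z l)
    (hφhat : ∀ r : R, φhat (algebraMap R (RHat R φ z l) r) = algebraMap R (RHat R φ z l) (φ r))
    (hφcont : ∀ n : ℕ, ∃ m : ℕ, ∀ x : RHat R φ z l,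
      RHat.proj R φ z l m x = 0 → RHat.proj R φ z l n (φhat x) = 0)
    (e : RHat R φ z l) (he : e * e = e)
    (heval : ∃ r : R, RHat.proj R φ z l 1 e = Submodule.Quotient.mk r ∧
      r - 1 ∈ Ideal.span {z} ∧
      ∀ i : ℕ, 1 ≤ i → i ≤ l - 1 → r ∈ Ideal.span {(φ ^ i) z})
    (M : Type u) [AddCommGroup M] [Module (GWA R φ z) M]
    (hM : ∀ m : M, ∃ n : ℕ, (GWA.X R φ z) ^ n • m = 0) :
    (∀ m : M, ∃ n : ℕ, (GWA.ofBase R φ z (gwaTau R φ z l)) ^ n • m = 0) ∧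
    ∃ s : RHat R φ z l → M → M, IsCompletedSMul R φ z l M s ∧
      (∀ s' : RHat R φ z l → M → M, IsCompletedSMul R φ z l M s' → s' = s) ∧
      (∀ m : M, (∃ n : ℕ, (GWA.ofBase R φ z z) ^ n • m = 0) ↔ s e m = m) :=
  statement16_general R φ z b l hb hl hφl hcop e he heval M hM
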